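/- Let C and J be n×n real positive semidefinite (symmetric) matrices. Then the matrix (I + C·J)^{-1}·C is symmetric and positive semidefinite. -/

import Mathlib

open Matrix
open scoped ComplexOrder MatrixOrder

/-!
Factor `C = Bᴴ B`. The push-through identity `(1 + X Y)⁻¹ X = X (1 + Y X)⁻¹` with `X = Bᴴ`,
`Y = B J` turns `(1 + C J)⁻¹ C` into the congruence `Bᴴ (1 + B J Bᴴ)⁻¹ B`, and `1 + B J Bᴴ` is
positive semidefinite, hence so is its inverse.
-/

namespace Matrix

variable {m n α : Type*} [Fintype m] [Fintype n] [DecidableEq m] [DecidableEq n] [CommRing α]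

/-- The push-through identity. It holds even for singular `1 + A * B`: by the Weinstein–Aronszajn
identity `1 + B * A` is then singular too, and both junk inverses are `0`. -/
theorem inv_one_add_mul_mul_eq_mul_inv_one_add_mul (A : Matrix m n α) (B : Matrix n m α) :
    (1 + A * B)⁻¹ * A = A * (1 + B * A)⁻¹ := by
  by_cases h : IsUnit (1 + A * B).det
  · have h' : IsUnit (1 + B * A).det := det_one_add_mul_comm A B ▸ h
    let _ := invertibleOfIsUnitDet _ h
    have hcomm : (1 + A * B) * A = A * (1 + B * A) := by
      simp only [Matrix.add_mul, Matrix.mul_add, Matrix.one_mul, Matrix.mul_one, Matrix.mul_assoc]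
    rw [inv_mul_eq_iff_eq_mul_of_invertible, ← Matrix.mul_assoc, hcomm,
      mul_nonsing_inv_cancel_right _ _ h']
  · have h' : ¬IsUnit (1 + B * A).det := det_one_add_mul_comm A B ▸ h
    rw [nonsing_inv_apply_not_isUnit _ h, nonsing_inv_apply_not_isUnit _ h', Matrix.zero_mul,
      Matrix.mul_zero]

theorem PosSemidef.inv_one_add_mul_mul {𝕜 : Type*} [RCLike 𝕜] {C J : Matrix n n 𝕜}
    (hC : C.PosSemidef) (hJ : J.PosSemidef) : ((1 + C * J)⁻¹ * C).PosSemidef := by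
  obtain ⟨B, rfl⟩ := CStarAlgebra.nonneg_iff_eq_star_mul_self.mp hC.nonneg
  rw [star_eq_conjTranspose]
  have hcongr : (1 + Bᴴ * B * J)⁻¹ * (Bᴴ * B) = Bᴴ * (1 + B * J * Bᴴ)⁻¹ * B := by
    rw [← Matrix.mul_assoc, Matrix.mul_assoc Bᴴ B J,
      inv_one_add_mul_mul_eq_mul_inv_one_add_mul, Matrix.mul_assoc B J]
  have hM : (1 + B * J * Bᴴ).PosSemidef := PosSemidef.one.add (hJ.mul_mul_conjTranspose_same B)
  rw [hcongr]
  exact hM.inv.conjTranspose_mul_mul_same B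

end Matrix

/-- For positive semidefinite real matrices `C` and `J`, the matrix
`(I + C * J)⁻¹ * C` is again symmetric positive semidefinite. -/
theorem posSemidef_inv_one_add_mul (n : ℕ) (C J : Matrix (Fin n) (Fin n) ℝ)
    (hC : C.PosSemidef) (hJ : J.PosSemidef) :
    ((1 + C * J)⁻¹ * C).PosSemidef :=
  hC.inv_one_add_mul_mul hJ
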